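/- arXiv:2304.10653 — 3 statements merged into one kernel-verified Lean document; each statement's English description precedes it below -/
import Mathlib

section
/- Let S be a linear subspace of ℝⁿ × ℝᵐ and let (x,y) ∈ S with (x,y) ≠ (0,0). Then ‖π_{S^⊥}(0,y)‖² ≤ ‖x‖²‖y‖² / (‖x‖² + ‖y‖²). -/
/-- The Euclidean space `ℝⁿ × ℝᵐ` with the (L²) product inner product. -/
noncomputable abbrev E2 (n m : ℕ) :=
  WithLp 2 (EuclideanSpace ℝ (Fin n) × EuclideanSpace ℝ (Fin m))

/-- The point `(x, y)` of `ℝⁿ × ℝᵐ`. -/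
noncomputable def mk2 {n m : ℕ} (x : EuclideanSpace ℝ (Fin n))
    (y : EuclideanSpace ℝ (Fin m)) : E2 n m :=
  (WithLp.linearEquiv 2 ℝ _).symm (x, y)

/-- The orthogonal projection of `E` onto the subspace `V`, as a map `E → E`. -/
noncomputable def proj {E : Type*} [NormedAddCommGroup E] [InnerProductSpace ℝ E]
    (V : Submodule ℝ E) [V.HasOrthogonalProjection] : E →L[ℝ] E :=
  V.subtypeL.comp (V.orthogonalProjectionOnto)

/-! Decompose `v = (0,y)` as `p + q` with `p ∈ S`, `q ∈ Sᗮ`. Since `X = (x,y) ∈ S`,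
`⟪p, X⟫ = ⟪v, X⟫ = ‖y‖²`, so Cauchy–Schwarz gives `‖p‖² ‖X‖² ≥ ‖y‖⁴`, and then
`‖q‖² = ‖y‖² - ‖p‖² ≤ ‖y‖² - ‖y‖⁴ / (‖x‖² + ‖y‖²) = ‖x‖² ‖y‖² / (‖x‖² + ‖y‖²)`. -/

open RealInnerProductSpace

namespace Submodule

variable {E : Type*} [NormedAddCommGroup E] [InnerProductSpace ℝ E]

theorem sq_norm_starProjection_orthogonal_mul_le (K : Submodule ℝ E) [K.HasOrthogonalProjection]
    {w : E} (hw : w ∈ K) (v : E) :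
    ‖Kᗮ.starProjection v‖ ^ 2 * ‖w‖ ^ 2 ≤ ‖v‖ ^ 2 * ‖w‖ ^ 2 - ⟪v, w⟫ ^ 2 := by
  have hinner : ⟪v, w⟫ = ⟪K.starProjection v, w⟫ := by
    rw [K.inner_starProjection_left_eq_right, K.starProjection_eq_self_iff.mpr hw]
  have hcs : ⟪K.starProjection v, w⟫ ^ 2 ≤ ‖K.starProjection v‖ ^ 2 * ‖w‖ ^ 2 := by
    rw [sq, sq, sq, ← real_inner_self_eq_norm_mul_norm, ← real_inner_self_eq_norm_mul_norm]
    exact real_inner_mul_inner_self_le _ _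
  rw [hinner, norm_sq_eq_add_norm_sq_starProjection v K]
  linarith

end Submodule

theorem proj_eq_starProjection {E : Type*} [NormedAddCommGroup E] [InnerProductSpace ℝ E]
    (V : Submodule ℝ E) [V.HasOrthogonalProjection] : proj V = V.starProjection :=
  rfl

section ProdL2

variable {n m : ℕ}

theorem sq_norm_mk2 (x : EuclideanSpace ℝ (Fin n)) (y : EuclideanSpace ℝ (Fin m)) :
    ‖mk2 x y‖ ^ 2 = ‖x‖ ^ 2 + ‖y‖ ^ 2 :=
  WithLp.prod_norm_sq_eq_of_L2 _

theorem inner_mk2 (x x' : EuclideanSpace ℝ (Fin n)) (y y' : EuclideanSpace ℝ (Fin m)) :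
    ⟪mk2 x y, mk2 x' y'⟫ = ⟪x, x'⟫ + ⟪y, y'⟫ :=
  WithLp.prod_inner_apply _ _

end ProdL2

theorem stmt3_general (n m : ℕ) (S : Submodule ℝ (E2 n m))
    (x : EuclideanSpace ℝ (Fin n)) (y : EuclideanSpace ℝ (Fin m))
    (hxy : mk2 x y ∈ S) :
    ‖proj Sᗮ (mk2 0 y)‖ ^ 2 ≤ ‖x‖ ^ 2 * ‖y‖ ^ 2 / (‖x‖ ^ 2 + ‖y‖ ^ 2) := by
  rcases eq_or_ne y 0 with rfl | hy
  · have hzero : mk2 (0 : EuclideanSpace ℝ (Fin n)) (0 : EuclideanSpace ℝ (Fin m)) = 0 := rfl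
    simp [hzero]
  have hpos : 0 < ‖x‖ ^ 2 + ‖y‖ ^ 2 := by positivity
  have key := S.sq_norm_starProjection_orthogonal_mul_le hxy (mk2 0 y)
  rw [← proj_eq_starProjection, sq_norm_mk2, sq_norm_mk2, inner_mk2, inner_zero_left, zero_add,
    real_inner_self_eq_norm_sq, norm_zero] at key
  rw [le_div_iff₀ hpos]
  linarith

/-- If `S` is a linear subspace of `ℝⁿ × ℝᵐ` and `(x,y) ∈ S` with `(x,y) ≠ (0,0)`, then
`‖π_{S^⊥}(0,y)‖² ≤ ‖x‖²‖y‖² / (‖x‖² + ‖y‖²)`. -/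
theorem stmt3 (n m : ℕ) (S : Submodule ℝ (E2 n m))
    (x : EuclideanSpace ℝ (Fin n)) (y : EuclideanSpace ℝ (Fin m))
    (hxy : mk2 x y ∈ S) (hne : mk2 x y ≠ 0) :
    ‖proj Sᗮ (mk2 0 y)‖ ^ 2 ≤ ‖x‖ ^ 2 * ‖y‖ ^ 2 / (‖x‖ ^ 2 + ‖y‖ ^ 2) :=
  stmt3_general n m S x y hxy
end

section
/- Let n ≥ 2, m ≥ 1, α > 0, and let φ : ℝⁿ∖{0} → ℝᵐ be continuously differentiable, not identically zero, and positively homogeneous of degree α (i.e., φ(tx) = t^α φ(x) for all t > 0 and x ≠ 0). If ∫_{B₁(0)} ‖x‖^{2−n} ‖∂_r(φ(x)/‖x‖)‖² dx < ∞, where ∂_r(φ/‖x‖)(x) denotes the directional derivative of the map y ↦ φ(y)/‖y‖ at x in the radial direction x/‖x‖, then α ≥ 1. -/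
/-!
Dividing by `‖x‖` turns `φ` into a map homogeneous of degree `α - 1`, so by Euler's identity its
radial derivative is `(α - 1) ‖x‖⁻² φ x`, and the integrand is homogeneous of degree
`2α - 2 - n`. Rescaling, the integral over `B_{1/2}(0)` is `2^{2 - 2α}` times the one over
`B_1(0)`. It is also at most that integral, which is positive if `α ≠ 1` because `φ`, by
continuity and homogeneity, is nonzero on an open subset of the ball. Hence `2α - 2 ≥ 0`.
-/

open MeasureTheory Metric Module

section NormedSpace

variable {E F : Type*} [NormedAddCommGroup E] [NormedSpace ℝ E]
  [NormedAddCommGroup F] [NormedSpace ℝ F]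

theorem fderiv_apply_self_of_homogeneous {g : E → F} {a : ℝ} {x : E}
    (hg : DifferentiableAt ℝ g x) (hhom : ∀ t : ℝ, 0 < t → g (t • x) = t ^ a • g x) :
    fderiv ℝ g x x = a • g x := by
  have hray : HasDerivAt (fun t : ℝ => g (t • x)) (fderiv ℝ g x x) 1 := by
    have hfd : HasFDerivAt g (fderiv ℝ g x) ((1 : ℝ) • x) := by
      simpa using hg.hasFDerivAt
    simpa [Function.comp_def] using
      hfd.comp_hasDerivAt (1 : ℝ) ((hasDerivAt_id (1 : ℝ)).smul_const x)
  have hpow : HasDerivAt (fun t : ℝ => t ^ a • g x) (a • g x) 1 := by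
    simpa using (Real.hasDerivAt_rpow_const (x := 1) (p := a) (Or.inl one_ne_zero)).smul_const (g x)
  refine hray.unique (hpow.congr_of_eventuallyEq ?_)
  filter_upwards [eventually_gt_nhds one_pos] with t ht
  exact hhom t ht

theorem inv_norm_smul_apply_smul {φ : E → F} {α t : ℝ} (ht : 0 < t)
    (hφ : ∀ x, x ≠ 0 → φ (t • x) = t ^ α • φ x) (x : E) :
    ‖t • x‖⁻¹ • φ (t • x) = t ^ (α - 1) • (‖x‖⁻¹ • φ x) := by
  rcases eq_or_ne x 0 with rfl | hx
  · simp
  rw [hφ x hx, norm_smul, Real.norm_of_nonneg ht.le, smul_smul, smul_smul, mul_inv,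
    Real.rpow_sub ht, Real.rpow_one]
  ring_nf

theorem norm_rpow_mul_norm_sq_of_homogeneous {g : E → F} {a q t : ℝ} (ht : 0 < t) {x : E}
    (hg : g (t • x) = t ^ q • g x) :
    ‖t • x‖ ^ a * ‖g (t • x)‖ ^ 2 = t ^ (a + 2 * q) * (‖x‖ ^ a * ‖g x‖ ^ 2) := by
  rw [hg, norm_smul, norm_smul, Real.norm_of_nonneg ht.le,
    Real.norm_of_nonneg (Real.rpow_nonneg ht.le q), Real.mul_rpow ht.le (norm_nonneg x),
    Real.rpow_add ht, mul_comm 2 q, Real.rpow_mul ht.le, Real.rpow_two]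
  ring

theorem exists_mem_ball_apply_ne_zero_of_homogeneous {φ : E → F} {α : ℝ}
    (hhom : ∀ t : ℝ, 0 < t → ∀ x : E, x ≠ 0 → φ (t • x) = t ^ α • φ x)
    (hnz : ∃ x, x ≠ 0 ∧ φ x ≠ 0) {r : ℝ} (hr : 0 < r) :
    ∃ x ∈ ball (0 : E) r, x ≠ 0 ∧ φ x ≠ 0 := by
  obtain ⟨x, hx, hφx⟩ := hnz
  have hnx : 0 < ‖x‖ := norm_pos_iff.2 hx
  set t := r / (2 * ‖x‖)
  have ht : 0 < t := by positivity
  refine ⟨t • x, ?_, smul_ne_zero ht.ne' hx, ?_⟩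
  · rw [mem_ball_zero_iff, norm_smul, Real.norm_of_nonneg ht.le]
    calc t * ‖x‖ = r / 2 := by simp only [t]; field_simp
      _ < r := by linarith
  · rw [hhom t ht x hx]
    exact smul_ne_zero (Real.rpow_pos_of_pos ht α).ne' hφx

end NormedSpace

section Integral

variable {X : Type*} [TopologicalSpace X] [MeasurableSpace X] {μ : Measure X}
  [μ.IsOpenPosMeasure]

theorem setIntegral_pos_of_pos_on_isOpen {f : X → ℝ} {s U : Set X} (hf : 0 ≤ᵐ[μ.restrict s] f)
    (hfi : IntegrableOn f s μ) (hU : IsOpen U) (hUs : U ⊆ s) (hUne : U.Nonempty)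
    (hfU : ∀ x ∈ U, 0 < f x) : 0 < ∫ x in s, f x ∂μ := by
  rw [setIntegral_pos_iff_support_of_nonneg_ae hf hfi]
  exact (hU.measure_pos μ hUne).trans_le (measure_mono fun x hx => ⟨(hfU x hx).ne', hUs hx⟩)

end Integral

section HaarMeasure

variable {E : Type*} [NormedAddCommGroup E] [NormedSpace ℝ E] [FiniteDimensional ℝ E]
  [MeasurableSpace E] [BorelSpace E] (μ : Measure E) [μ.IsAddHaarMeasure]

theorem setIntegral_ball_of_homogeneous {f : E → ℝ} {p : ℝ}
    (hf : ∀ t : ℝ, 0 < t → ∀ x, f (t • x) = t ^ p * f x) {r : ℝ} (hr : 0 < r) :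
    ∫ x in ball 0 r, f x ∂μ = r ^ (p + finrank ℝ E) * ∫ x in ball 0 1, f x ∂μ := by
  have hscale := Measure.setIntegral_comp_smul_of_pos μ f (ball 0 1) hr
  rw [smul_unitBall_of_pos hr, integral_congr_ae (ae_of_all _ fun x => hf r hr x),
    integral_const_mul, eq_inv_smul_iff₀ (by positivity)] at hscale
  rw [← hscale, smul_eq_mul, ← mul_assoc, Real.rpow_add hr, Real.rpow_natCast, mul_comm (r ^ p)]

theorem neg_finrank_le_of_homogeneous {f : E → ℝ} {p : ℝ}
    (hf : ∀ t : ℝ, 0 < t → ∀ x, f (t • x) = t ^ p * f x) (hf0 : ∀ x, 0 ≤ f x)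
    (hint : IntegrableOn f (ball 0 1) μ) (hpos : 0 < ∫ x in ball 0 1, f x ∂μ) :
    -(finrank ℝ E : ℝ) ≤ p := by
  have hmono : ∫ x in ball 0 (1 / 2), f x ∂μ ≤ ∫ x in ball 0 1, f x ∂μ :=
    setIntegral_mono_set hint (ae_of_all _ hf0) (ae_of_all _ (ball_subset_ball (by norm_num)))
  rw [setIntegral_ball_of_homogeneous μ hf (by norm_num)] at hmono
  have hle : (1 / 2 : ℝ) ^ (p + finrank ℝ E) ≤ 1 := (mul_le_iff_le_one_left hpos).1 hmono
  rw [Real.rpow_le_one_iff_of_pos (by norm_num)] at hle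
  norm_num at hle
  linarith

end HaarMeasure

section InnerProductSpace

variable {E F : Type*} [NormedAddCommGroup E] [InnerProductSpace ℝ E]
  [NormedAddCommGroup F] [NormedSpace ℝ F]

theorem radial_fderiv_inv_norm_smul {φ : E → F} {α : ℝ} (hφ : DifferentiableOn ℝ φ {x | x ≠ 0})
    (hhom : ∀ t : ℝ, 0 < t → ∀ x : E, x ≠ 0 → φ (t • x) = t ^ α • φ x) (x : E) :
    fderiv ℝ (fun y => ‖y‖⁻¹ • φ y) x (‖x‖⁻¹ • x) = (α - 1) • (‖x‖⁻¹ • (‖x‖⁻¹ • φ x)) := by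
  rcases eq_or_ne x 0 with rfl | hx
  · simp
  have hdiff : DifferentiableAt ℝ (fun y => ‖y‖⁻¹ • φ y) x :=
    ((differentiableAt_id.norm ℝ hx).inv (norm_ne_zero_iff.2 hx)).smul
      (hφ.differentiableAt (isOpen_ne.mem_nhds hx))
  rw [map_smul, fderiv_apply_self_of_homogeneous hdiff
    fun t ht => inv_norm_smul_apply_smul ht (hhom t ht) x, smul_comm]

end InnerProductSpace

theorem stmt12_general (n m : ℕ) (α : ℝ)
    (φ : EuclideanSpace ℝ (Fin n) → EuclideanSpace ℝ (Fin m))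
    (hφ : ContDiffOn ℝ 1 φ {x | x ≠ 0})
    (hnz : ∃ x, x ≠ 0 ∧ φ x ≠ 0)
    (hhom : ∀ t : ℝ, 0 < t → ∀ x : EuclideanSpace ℝ (Fin n), x ≠ 0 →
      φ (t • x) = (t ^ α) • φ x)
    (hint : IntegrableOn
      (fun x : EuclideanSpace ℝ (Fin n) =>
        ‖x‖ ^ ((2 : ℝ) - n) * ‖fderiv ℝ (fun y => ‖y‖⁻¹ • φ y) x (‖x‖⁻¹ • x)‖ ^ 2)
      (Metric.ball (0 : EuclideanSpace ℝ (Fin n)) 1)) :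
    1 ≤ α := by
  by_contra! hα
  set R := fun x : EuclideanSpace ℝ (Fin n) => (α - 1) • (‖x‖⁻¹ • (‖x‖⁻¹ • φ x))
  have hR : ∀ t : ℝ, 0 < t → ∀ x, R (t • x) = t ^ (α - 2) • R x := by
    intro t ht x
    have h₁ := inv_norm_smul_apply_smul ht (hhom t ht)
    have h₂ := inv_norm_smul_apply_smul (φ := fun y => ‖y‖⁻¹ • φ y) ht (fun y _ => h₁ y) x
    simp only [R] at h₂ ⊢
    rw [h₂, smul_comm, sub_sub, one_add_one_eq_two]
  simp only [radial_fderiv_inv_norm_smul (hφ.differentiableOn one_ne_zero) hhom] at hint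
  set f := fun x : EuclideanSpace ℝ (Fin n) => ‖x‖ ^ ((2 : ℝ) - n) * ‖R x‖ ^ 2
  have hf : ∀ t : ℝ, 0 < t → ∀ x, f (t • x) = t ^ ((2 : ℝ) - n + 2 * (α - 2)) * f x :=
    fun t ht x => norm_rpow_mul_norm_sq_of_homogeneous ht (hR t ht x)
  have hpos : 0 < ∫ x in ball 0 1, f x := by
    obtain ⟨x₀, hx₀ball, hx₀, hφx₀⟩ :=
      exists_mem_ball_apply_ne_zero_of_homogeneous hhom hnz one_pos
    refine setIntegral_pos_of_pos_on_isOpen (ae_of_all _ fun x => by positivity) hint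
      ((hφ.continuousOn.isOpen_inter_preimage isOpen_ne isOpen_ne).inter isOpen_ball)
      Set.inter_subset_right ⟨x₀, ⟨hx₀, hφx₀⟩, hx₀ball⟩ ?_
    rintro x ⟨⟨hx : x ≠ 0, hφx : φ x ≠ 0⟩, -⟩
    have hRx : R x ≠ 0 := by simp [R, hx, hφx, sub_ne_zero.2 hα.ne]
    positivity
  have hdim := neg_finrank_le_of_homogeneous volume hf (fun x => by positivity) hint hpos
  rw [finrank_euclideanSpace_fin] at hdim
  linarith

/-- Let `φ : ℝⁿ∖{0} → ℝᵐ` be C¹, not identically zero, and positively homogeneous of degree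
`α > 0`. If `∫_{B₁(0)} ‖x‖^{2−n} ‖∂_r(φ(x)/‖x‖)‖² dx < ∞`, where `∂_r` is the directional
derivative of `y ↦ φ(y)/‖y‖` in the radial direction `x/‖x‖`, then `α ≥ 1`. -/
theorem stmt12 (n m : ℕ) (hn : 2 ≤ n) (hm : 1 ≤ m) (α : ℝ) (hα : 0 < α)
    (φ : EuclideanSpace ℝ (Fin n) → EuclideanSpace ℝ (Fin m))
    (hφ : ContDiffOn ℝ 1 φ {x | x ≠ 0})
    (hnz : ∃ x, x ≠ 0 ∧ φ x ≠ 0)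
    (hhom : ∀ t : ℝ, 0 < t → ∀ x : EuclideanSpace ℝ (Fin n), x ≠ 0 →
      φ (t • x) = (t ^ α) • φ x)
    (hint : IntegrableOn
      (fun x : EuclideanSpace ℝ (Fin n) =>
        ‖x‖ ^ ((2 : ℝ) - n) * ‖fderiv ℝ (fun y => ‖y‖⁻¹ • φ y) x (‖x‖⁻¹ • x)‖ ^ 2)
      (Metric.ball (0 : EuclideanSpace ℝ (Fin n)) 1)) :
    1 ≤ α :=
  stmt12_general n m α φ hφ hnz hhom hint
end

section
/- Let S be an n-dimensional linear subspace of ℝⁿ × ℝᵐ with orthonormal basis τ₁, …, τₙ, let P₀ = ℝⁿ × {0}, let ψ : ℝ → ℝ be differentiable, and define the vector field ζ(x,y) = ψ(‖x‖)·(0,y) on ℝⁿ × ℝᵐ. Then at every point (x,y) with x ≠ 0, the tangential divergence of ζ along S satisfies ∑_{i=1}^n ⟨Dζ(x,y)[τᵢ], τᵢ⟩ = (1/2) ψ(‖x‖) ‖π_S − π_{P₀}‖_F² + ψ'(‖x‖) ⟨(0,y), π_S(x,0)⟩ / ‖x‖. -/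
/-- The first component `x` of a point `(x,y)` of `ℝⁿ × ℝᵐ`. -/
noncomputable def fst2 {n m : ℕ} (p : E2 n m) : EuclideanSpace ℝ (Fin n) :=
  (WithLp.equiv 2 (EuclideanSpace ℝ (Fin n) × EuclideanSpace ℝ (Fin m)) p).1

/-- The second component `y` of a point `(x,y)` of `ℝⁿ × ℝᵐ`. -/
noncomputable def snd2 {n m : ℕ} (p : E2 n m) : EuclideanSpace ℝ (Fin m) :=
  (WithLp.equiv 2 (EuclideanSpace ℝ (Fin n) × EuclideanSpace ℝ (Fin m)) p).2

/-- The plane `P₀ = ℝⁿ × {0}` as a linear subspace of `ℝⁿ × ℝᵐ`. -/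
noncomputable def P0 (n m : ℕ) : Submodule ℝ (E2 n m) :=
  (Submodule.prod (⊤ : Submodule ℝ (EuclideanSpace ℝ (Fin n)))
    (⊥ : Submodule ℝ (EuclideanSpace ℝ (Fin m)))).comap
      (WithLp.linearEquiv 2 ℝ _).toLinearMap

/-- The squared Frobenius (Hilbert–Schmidt) norm of a linear map `T : E → E`,
computed via an orthonormal basis of `E`. -/
noncomputable def frobSq {E : Type*} [NormedAddCommGroup E] [InnerProductSpace ℝ E]
    [FiniteDimensional ℝ E] (T : E →L[ℝ] E) : ℝ :=
  ∑ i, ‖T (stdOrthonormalBasis ℝ E i)‖ ^ 2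

/-!
Writing `P₀ᗮ = {0} × ℝᵐ`, the field is `ζ(p) = ψ(‖π_{P₀} p‖) π_{P₀ᗮ} p`, so by the chain rule
`Dζ(x,y)[v] = ψ(‖x‖) π_{P₀ᗮ} v + ψ'(‖x‖) ⟨x, π_{P₀} v⟩ / ‖x‖ · (0,y)`. Paired with `τᵢ` and summed,
the second term gives `ψ'(‖x‖) ∑ᵢ ⟨τᵢ, (x,0)⟩ ⟨(0,y), τᵢ⟩ / ‖x‖ = ψ'(‖x‖) ⟨(0,y), π_S(x,0)⟩ / ‖x‖`
and the first gives `ψ(‖x‖) ∑ᵢ ‖π_{P₀ᗮ} τᵢ‖²`. In an orthonormal basis extending `(τᵢ)`, the map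
`π_S − π_{P₀}` sends `τᵢ` to `π_{P₀ᗮ} τᵢ` and every further basis vector `b` to `−π_{P₀} b`. As
`∑ ‖π_{P₀} b‖² = tr π_{P₀} = n` over the whole basis and `‖π_{P₀} τᵢ‖² = 1 − ‖π_{P₀ᗮ} τᵢ‖²`, both
kinds of basis vectors contribute `∑ᵢ ‖π_{P₀ᗮ} τᵢ‖²`, so
`‖π_S − π_{P₀}‖_F² = 2 ∑ᵢ ‖π_{P₀ᗮ} τᵢ‖²`.
-/

open scoped InnerProductSpace
open Module Submodule

theorem HasFDerivAt.norm {G F : Type*} [NormedAddCommGroup G] [NormedSpace ℝ G]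
    [NormedAddCommGroup F] [InnerProductSpace ℝ F] {f : G → F} {f' : G →L[ℝ] F} {x : G}
    (hf : HasFDerivAt f f' x) (h0 : f x ≠ 0) :
    HasFDerivAt (fun y => ‖f y‖) (‖f x‖⁻¹ • (innerSL ℝ (f x)).comp f') x := by
  have h := hf.norm_sq.sqrt (by positivity)
  simp only [Real.sqrt_sq (norm_nonneg _)] at h
  convert h using 1
  ext v
  simp [field]

theorem fderiv_norm_smul_apply {E F G : Type*} [NormedAddCommGroup E] [NormedSpace ℝ E]
    [NormedAddCommGroup F] [InnerProductSpace ℝ F] [NormedAddCommGroup G] [NormedSpace ℝ G]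
    (A : E →L[ℝ] F) (B : E →L[ℝ] G) {ψ : ℝ → ℝ} {p : E} (hp : A p ≠ 0)
    (hψ : DifferentiableAt ℝ ψ ‖A p‖) (v : E) :
    fderiv ℝ (fun q => ψ ‖A q‖ • B q) p v =
      ψ ‖A p‖ • B v + (deriv ψ ‖A p‖ * ⟪A p, A v⟫_ℝ / ‖A p‖) • B p := by
  have h : HasFDerivAt (fun q => ψ ‖A q‖ • B q) _ p :=
    (hψ.hasDerivAt.comp_hasFDerivAt p (A.hasFDerivAt.norm hp)).smul B.hasFDerivAt
  rw [h.fderiv]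
  simp [div_eq_inv_mul, mul_left_comm]

section

variable {𝕜 E ι κ : Type*} [RCLike 𝕜] [NormedAddCommGroup E] [InnerProductSpace 𝕜 E]
  [Fintype ι] [Fintype κ]

theorem Orthonormal.starProjection_span_apply {τ : ι → E} (hτ : Orthonormal 𝕜 τ)
    [(span 𝕜 (Set.range τ)).HasOrthogonalProjection] (u : E) :
    (span 𝕜 (Set.range τ)).starProjection u = ∑ i, ⟪τ i, u⟫_𝕜 • τ i := by
  refine eq_starProjection_of_mem_orthogonal
    (sum_mem fun i _ => smul_mem _ _ (subset_span (Set.mem_range_self i))) ?_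
  have h : span 𝕜 (Set.range τ) ⟂ span 𝕜 {u - ∑ i, ⟪τ i, u⟫_𝕜 • τ i} := by
    rw [isOrtho_span]
    rintro _ ⟨j, rfl⟩ _ rfl
    rw [inner_sub_right, hτ.inner_right_fintype, sub_self]
  exact isOrtho_iff_le.mp h.symm (mem_span_singleton_self _)

theorem Orthonormal.exists_orthonormalBasis_sum_extension [FiniteDimensional 𝕜 E]
    {τ : ι → E} (hτ : Orthonormal 𝕜 τ) (hcard : finrank 𝕜 E = Fintype.card ι + Fintype.card κ) :
    ∃ b : OrthonormalBasis (ι ⊕ κ) 𝕜 E, ∀ i, b (Sum.inl i) = τ i := by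
  have hrestrict : (Set.range Sum.inl).domRestrict (Sum.elim τ 0 : ι ⊕ κ → E) =
      τ ∘ (Equiv.ofInjective _ Sum.inl_injective).symm := by
    ext ⟨_, i, rfl⟩
    simp [Set.domRestrict]
  obtain ⟨b, hb⟩ := (hrestrict ▸ hτ.comp _ (Equiv.injective _))
    |>.exists_orthonormalBasis_extension_of_card_eq (by rw [hcard, Fintype.card_sum])
  exact ⟨b, fun i => hb _ (Set.mem_range_self i)⟩

end

section

variable {E ι κ : Type*} [NormedAddCommGroup E] [InnerProductSpace ℝ E] [Fintype ι] [Fintype κ]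

theorem sum_norm_sq_apply_eq_sum_norm_sq_adjoint [CompleteSpace E]
    (b : OrthonormalBasis ι ℝ E) (c : OrthonormalBasis κ ℝ E) (T : E →L[ℝ] E) :
    ∑ i, ‖T (b i)‖ ^ 2 = ∑ j, ‖T.adjoint (c j)‖ ^ 2 := by
  simp_rw [← c.sum_sq_inner_right (T _), ← b.sum_sq_inner_left (T.adjoint _),
    ContinuousLinearMap.adjoint_inner_left]
  exact Finset.sum_comm

variable [FiniteDimensional ℝ E]

theorem frobSq_eq_sum_norm_sq (b : OrthonormalBasis ι ℝ E) (T : E →L[ℝ] E) :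
    frobSq T = ∑ i, ‖T (b i)‖ ^ 2 := by
  rw [frobSq, sum_norm_sq_apply_eq_sum_norm_sq_adjoint _ b,
    sum_norm_sq_apply_eq_sum_norm_sq_adjoint b b, ContinuousLinearMap.adjoint_adjoint]

theorem Submodule.real_inner_starProjection_starProjection (V : Submodule ℝ E) (u v : E) :
    ⟪V.starProjection u, V.starProjection v⟫_ℝ = ⟪V.starProjection u, v⟫_ℝ := by
  rw [← V.inner_starProjection_left_eq_right,
    starProjection_eq_self_iff.mpr (V.starProjection_apply_mem u)]

theorem Submodule.real_inner_starProjection_eq_norm_sq (V : Submodule ℝ E) (v : E) :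
    ⟪V.starProjection v, v⟫_ℝ = ‖V.starProjection v‖ ^ 2 := by
  rw [← real_inner_self_eq_norm_sq, real_inner_starProjection_starProjection]

theorem frobSq_starProjection (V : Submodule ℝ E) :
    frobSq V.starProjection = finrank ℝ V := by
  have hproj : LinearMap.IsProj V (V.starProjection : E →ₗ[ℝ] E) := by
    simpa using LinearMap.IsIdempotentElem.isProj_range _
      (ContinuousLinearMap.IsIdempotentElem.toLinearMap V.isIdempotentElem_starProjection)
  rw [← hproj.trace, LinearMap.trace_eq_sum_inner _ (stdOrthonormalBasis ℝ E), frobSq]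
  refine Finset.sum_congr rfl fun i _ => ?_
  rw [real_inner_comm]
  exact (V.real_inner_starProjection_eq_norm_sq _).symm

theorem frobSq_starProjection_span_sub_starProjection {τ : ι → E} (hτ : Orthonormal ℝ τ)
    (V : Submodule ℝ E) (hcard : Fintype.card ι = finrank ℝ V) :
    frobSq ((span ℝ (Set.range τ)).starProjection - V.starProjection) =
      2 * ∑ i, ‖Vᗮ.starProjection (τ i)‖ ^ 2 := by
  have hle : Fintype.card ι ≤ finrank ℝ E := hτ.linearIndependent.fintype_card_le_finrank
  obtain ⟨b, hb⟩ := hτ.exists_orthonormalBasis_sum_extension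
    (κ := Fin (finrank ℝ E - Fintype.card ι)) (by simp; omega)
  have hS_inl : ∀ i, (span ℝ (Set.range τ)).starProjection (τ i) = τ i := fun i =>
    starProjection_eq_self_iff.mpr (subset_span (Set.mem_range_self i))
  have hS_inr : ∀ j, (span ℝ (Set.range τ)).starProjection (b (Sum.inr j)) = 0 := by
    intro j
    simp [hτ.starProjection_span_apply, ← hb, b.orthonormal.inner_eq_zero Sum.inl_ne_inr]
  have hpyth : ∀ i, ‖V.starProjection (τ i)‖ ^ 2 = 1 - ‖Vᗮ.starProjection (τ i)‖ ^ 2 := by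
    intro i
    rw [eq_sub_iff_add_eq, ← norm_sq_eq_add_norm_sq_starProjection, hτ.1 i, one_pow]
  have hV := frobSq_starProjection V
  rw [frobSq_eq_sum_norm_sq b, Fintype.sum_sum_type] at hV
  rw [frobSq_eq_sum_norm_sq b, Fintype.sum_sum_type]
  have hperp : ∀ v, v - V.starProjection v = Vᗮ.starProjection v := fun v => by
    simp [starProjection_orthogonal']
  simp only [sub_apply, hb, hS_inl, hS_inr, hperp, zero_sub, norm_neg]
  simp only [hb, hpyth, Finset.sum_sub_distrib, Finset.sum_const, Finset.card_univ,
    nsmul_eq_mul, mul_one, hcard] at hV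
  linarith

theorem sum_inner_fderiv_norm_starProjection_smul {τ : ι → E} (hτ : Orthonormal ℝ τ)
    (V : Submodule ℝ E) (hcard : Fintype.card ι = finrank ℝ V) {ψ : ℝ → ℝ} {p : E}
    (hp : V.starProjection p ≠ 0) (hψ : DifferentiableAt ℝ ψ ‖V.starProjection p‖) :
    ∑ i, ⟪fderiv ℝ (fun q => ψ ‖V.starProjection q‖ • Vᗮ.starProjection q) p (τ i), τ i⟫_ℝ =
      1 / 2 * ψ ‖V.starProjection p‖ *
          frobSq ((span ℝ (Set.range τ)).starProjection - V.starProjection) +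
        deriv ψ ‖V.starProjection p‖ *
          ⟪Vᗮ.starProjection p, (span ℝ (Set.range τ)).starProjection (V.starProjection p)⟫_ℝ /
            ‖V.starProjection p‖ := by
  simp_rw [fderiv_norm_smul_apply _ _ hp hψ,
    frobSq_starProjection_span_sub_starProjection hτ V hcard, hτ.starProjection_span_apply,
    inner_sum, inner_add_left, real_inner_smul_left, real_inner_smul_right,
    real_inner_starProjection_eq_norm_sq,
    real_inner_starProjection_starProjection, real_inner_comm _ (V.starProjection p)]
  rw [Finset.sum_add_distrib, ← Finset.mul_sum]
  congr 1
  · ring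
  · rw [Finset.mul_sum, Finset.sum_div]
    exact Finset.sum_congr rfl fun i _ => by ring

end

section

variable {n m : ℕ}

theorem mem_P0_iff {p : E2 n m} : p ∈ P0 n m ↔ snd2 p = 0 := by
  simp [P0, snd2]

theorem real_inner_e2 (p q : E2 n m) :
    ⟪p, q⟫_ℝ = ⟪fst2 p, fst2 q⟫_ℝ + ⟪snd2 p, snd2 q⟫_ℝ := rfl

theorem sub_mk2_fst2_zero (p : E2 n m) : p - mk2 (fst2 p) 0 = mk2 0 (snd2 p) := by
  change mk2 (fst2 p - fst2 p) (snd2 p - 0) = _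
  rw [sub_self, sub_zero]

theorem norm_mk2_zero (a : EuclideanSpace ℝ (Fin n)) : ‖(mk2 a 0 : E2 n m)‖ = ‖a‖ := by
  simp [mk2]

theorem finrank_P0 : finrank ℝ (P0 n m) = n := by
  have h : P0 n m = LinearMap.range
      ((WithLp.linearEquiv 2 ℝ _).symm.toLinearMap ∘ₗ LinearMap.inl ℝ _ _) := by
    ext p
    rw [mem_P0_iff]
    refine ⟨fun h => ⟨fst2 p, ?_⟩, by rintro ⟨a, rfl⟩; rfl⟩
    show mk2 (fst2 p) 0 = p
    rw [← h]
    rfl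
  rw [h]
  refine (LinearMap.finrank_range_of_inj ?_).trans finrank_euclideanSpace_fin
  exact (WithLp.linearEquiv 2 ℝ _).symm.injective.comp (LinearMap.inl_injective (R := ℝ))

theorem starProjection_P0_apply (p : E2 n m) : (P0 n m).starProjection p = mk2 (fst2 p) 0 := by
  refine eq_starProjection_of_mem_orthogonal (mem_P0_iff.mpr rfl) fun u hu => ?_
  rw [sub_mk2_fst2_zero, real_inner_e2, mem_P0_iff.mp hu]
  simp [mk2, fst2]

theorem starProjection_orthogonal_P0_apply (p : E2 n m) :
    (P0 n m)ᗮ.starProjection p = mk2 0 (snd2 p) := by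
  rw [starProjection_orthogonal', sub_apply, starProjection_P0_apply, ← sub_mk2_fst2_zero]
  rfl

end

/-- Tangential divergence along an `n`-dimensional subspace `S` of `ℝⁿ × ℝᵐ` (with orthonormal
basis `τ₁,…,τₙ`) of the vector field `ζ(x,y) = ψ(‖x‖)·(0,y)`: at every point `(x,y)` with
`x ≠ 0`, `∑ᵢ ⟨Dζ(x,y)[τᵢ], τᵢ⟩ = ½ψ(‖x‖)‖π_S − π_{P₀}‖_F² + ψ'(‖x‖)⟨(0,y), π_S(x,0)⟩/‖x‖`. -/
theorem stmt17 (n m : ℕ) (S : Submodule ℝ (E2 n m))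
    (τ : Fin n → E2 n m) (hτ : Orthonormal ℝ τ)
    (hspan : Submodule.span ℝ (Set.range τ) = S)
    (ψ : ℝ → ℝ) (hψ : Differentiable ℝ ψ)
    (x : EuclideanSpace ℝ (Fin n)) (y : EuclideanSpace ℝ (Fin m)) (hx : x ≠ 0) :
    ∑ i, (inner ℝ
        (fderiv ℝ (fun p : E2 n m => ψ ‖fst2 p‖ • mk2 0 (snd2 p)) (mk2 x y) (τ i))
        (τ i) : ℝ) =
      (1 / 2) * ψ ‖x‖ * frobSq (proj S - proj (P0 n m)) +
        deriv ψ ‖x‖ * (inner ℝ (mk2 0 y) (proj S (mk2 x 0)) : ℝ) / ‖x‖ := by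
  subst hspan
  have hζ : (fun p : E2 n m => ψ ‖fst2 p‖ • mk2 0 (snd2 p)) =
      fun p => ψ ‖(P0 n m).starProjection p‖ • (P0 n m)ᗮ.starProjection p := by
    funext p
    rw [starProjection_P0_apply, starProjection_orthogonal_P0_apply, norm_mk2_zero]
  have hnorm : ‖(P0 n m).starProjection (mk2 x y)‖ = ‖x‖ := by
    rw [starProjection_P0_apply, norm_mk2_zero]
    rfl
  have hp : (P0 n m).starProjection (mk2 x y) ≠ 0 :=
    norm_ne_zero_iff.mp (hnorm ▸ norm_ne_zero_iff.mpr hx)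
  rw [hζ, sum_inner_fderiv_norm_starProjection_smul hτ (P0 n m) (by simp [finrank_P0]) hp
    (hnorm ▸ hψ _), hnorm, starProjection_orthogonal_P0_apply, starProjection_P0_apply]
  rfl
end
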